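/- arXiv:0902.4288 — 3 statements merged into one kernel-verified Lean document; each statement's English description precedes it below -/
import Mathlib

section
/- For any nonzero singular 2×2 real matrix a, the Green L-class L_a and the Green R-class R_a are punctured planes: each is of the form P \ {0} where P is a 2-dimensional linear subspace of M₂(ℝ) ≅ ℝ⁴ contained in the set of singular matrices. -/
/-!
A nonzero singular `2 × 2` matrix `a` kills a nonzero row vector `v`, and the vectors orthogonal to
`(-v₁, v₀)` are exactly the multiples of `v`; hence `a` is an outer product `c rᵀ` with `c, r ≠ 0`.
For such an `a` the row space is `K r` and the left kernel is `c^⊥`. A matrix whose rows all lie in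
`K r` is of the form `d rᵀ`, and one whose left kernel contains `c^⊥` is of the form `c sᵀ` (split
off the `c`-component of a vector using some `w` with `w ⬝ c = 1`). So the two classes are the
planes `{d rᵀ}` and `{c sᵀ}` with `0` removed, and outer products are singular.
-/

open Matrix

namespace Matrix

variable {K m n : Type*} [Field K]

theorem vecMulVec_left_injective {r : n → K} (hr : r ≠ 0) :
    Function.Injective ((vecMulVecBilin K K).flip r : (m → K) →ₗ[K] Matrix m n K) := by
  rw [← LinearMap.ker_eq_bot, LinearMap.ker_eq_bot']
  intro d hd
  obtain ⟨j, hj⟩ := Function.ne_iff.mp hr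
  ext i
  exact (mul_eq_zero.mp (congrFun₂ hd i j)).resolve_right hj

theorem vecMulVec_right_injective {c : m → K} (hc : c ≠ 0) :
    Function.Injective (vecMulVecBilin K K c : (n → K) →ₗ[K] Matrix m n K) := by
  rw [← LinearMap.ker_eq_bot, LinearMap.ker_eq_bot']
  intro s hs
  obtain ⟨i, hi⟩ := Function.ne_iff.mp hc
  ext j
  exact (mul_eq_zero.mp (congrFun₂ hs i j)).resolve_left hi

variable [Fintype m]

theorem exists_dotProduct_eq_one {c : m → K} (hc : c ≠ 0) : ∃ v, v ⬝ᵥ c = 1 := by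
  classical
  obtain ⟨i, hi⟩ := Function.ne_iff.mp hc
  exact ⟨Pi.single i (c i)⁻¹, by rw [single_dotProduct, inv_mul_cancel₀ hi]⟩

theorem range_vecMulLinear_vecMulVec {c : m → K} (hc : c ≠ 0) (r : n → K) :
    LinearMap.range (vecMulVec c r).vecMulLinear = K ∙ r := by
  apply le_antisymm
  · rintro _ ⟨v, rfl⟩
    rw [vecMulLinear_apply, vecMul_vecMulVec]
    exact Submodule.smul_mem _ _ (Submodule.mem_span_singleton_self r)
  · obtain ⟨v, hv⟩ := exists_dotProduct_eq_one hc
    rw [Submodule.span_singleton_le_iff_mem]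
    exact ⟨v, by rw [vecMulLinear_apply, vecMul_vecMulVec, hv, one_smul]⟩

theorem mem_ker_vecMulLinear_vecMulVec (c : m → K) {r : n → K} (hr : r ≠ 0) (v : m → K) :
    v ∈ LinearMap.ker (vecMulVec c r).vecMulLinear ↔ v ⬝ᵥ c = 0 := by
  rw [LinearMap.mem_ker, vecMulLinear_apply, vecMul_vecMulVec, smul_eq_zero, or_iff_left hr]

theorem exists_eq_vecMulVec_of_forall_vecMul_mem_span {x : Matrix m n K} {r : n → K}
    (hx : ∀ v, v ᵥ* x ∈ K ∙ r) : ∃ d, x = vecMulVec d r := by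
  classical
  choose d hd using fun i => Submodule.mem_span_singleton.mp (hx (Pi.single i 1))
  refine ⟨d, ?_⟩
  ext i j
  simpa [vecMulVec_apply] using (congrFun (hd i) j).symm

theorem exists_eq_vecMulVec_of_forall_dotProduct_eq_zero {x : Matrix m n K} {c : m → K}
    (hc : c ≠ 0) (hx : ∀ v, v ⬝ᵥ c = 0 → v ᵥ* x = 0) : ∃ s, x = vecMulVec c s := by
  obtain ⟨w, hw⟩ := exists_dotProduct_eq_one hc
  refine ⟨w ᵥ* x, ext_iff_vecMul.mpr fun v => ?_⟩
  have h := hx (v - (v ⬝ᵥ c) • w) (by rw [sub_dotProduct, smul_dotProduct, hw]; simp)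
  rw [sub_vecMul, smul_vecMul, sub_eq_zero] at h
  rw [h, vecMul_vecMulVec]

theorem setOf_range_vecMulLinear_eq_vecMulVec {c : m → K} {r : n → K} (hc : c ≠ 0)
    (hr : r ≠ 0) :
    {x : Matrix m n K |
        LinearMap.range x.vecMulLinear = LinearMap.range (vecMulVec c r).vecMulLinear}
      = {x | x ∈ LinearMap.range ((vecMulVecBilin K K).flip r) ∧ x ≠ 0} := by
  ext x
  rw [Set.mem_ofPred_eq, Set.mem_ofPred_eq, range_vecMulLinear_vecMulVec hc]
  constructor
  · intro hx
    obtain ⟨d, rfl⟩ := exists_eq_vecMulVec_of_forall_vecMul_mem_span fun v =>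
      hx ▸ LinearMap.mem_range_self _ v
    refine ⟨⟨d, rfl⟩, fun h0 => hr ?_⟩
    obtain ⟨v, hv⟩ : r ∈ LinearMap.range (0 : Matrix m n K).vecMulLinear :=
      h0 ▸ hx ▸ Submodule.mem_span_singleton_self r
    rw [← hv, vecMulLinear_apply, vecMul_zero]
  · rintro ⟨⟨d, rfl⟩, hx0⟩
    refine range_vecMulLinear_vecMulVec (fun hd => hx0 ?_) r
    rw [hd, map_zero]

theorem setOf_ker_vecMulLinear_eq_vecMulVec {c : m → K} {r : n → K} (hc : c ≠ 0)
    (hr : r ≠ 0) :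
    {x : Matrix m n K |
        LinearMap.ker x.vecMulLinear = LinearMap.ker (vecMulVec c r).vecMulLinear}
      = {x | x ∈ LinearMap.range (vecMulVecBilin K K c) ∧ x ≠ 0} := by
  ext x
  rw [Set.mem_ofPred_eq, Set.mem_ofPred_eq]
  constructor
  · intro hx
    obtain ⟨s, rfl⟩ := exists_eq_vecMulVec_of_forall_dotProduct_eq_zero hc fun v hv => by
      rwa [← vecMulLinear_apply, ← LinearMap.mem_ker, hx, mem_ker_vecMulLinear_vecMulVec c hr]
    refine ⟨⟨s, rfl⟩, fun h0 => ?_⟩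
    obtain ⟨w, hw⟩ := exists_dotProduct_eq_one hc
    have hw_mem : w ∈ LinearMap.ker (vecMulVec c r).vecMulLinear := by
      rw [← hx, h0]
      simp
    rw [mem_ker_vecMulLinear_vecMulVec c hr, hw] at hw_mem
    exact one_ne_zero hw_mem
  · rintro ⟨⟨s, rfl⟩, hx0⟩
    have hs : s ≠ 0 := fun hs => hx0 (by rw [hs, map_zero])
    ext v
    rw [vecMulVecBilin_apply_apply, mem_ker_vecMulLinear_vecMulVec c hs,
      mem_ker_vecMulLinear_vecMulVec c hr]

theorem mem_span_singleton_of_dotProduct_eq_zero {u v : Fin 2 → K} (hv : v ≠ 0)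
    (h : u ⬝ᵥ ![-v 1, v 0] = 0) : u ∈ K ∙ v := by
  obtain ⟨w, hw⟩ := exists_dotProduct_eq_one hv
  have huv : u 0 * v 1 = u 1 * v 0 := by
    simp only [dotProduct, Fin.sum_univ_two, cons_val_zero, cons_val_one] at h
    linear_combination -h
  rw [dotProduct, Fin.sum_univ_two] at hw
  refine Submodule.mem_span_singleton.mpr ⟨w ⬝ᵥ u, ?_⟩
  ext i
  fin_cases i <;> simp [dotProduct, Fin.sum_univ_two]
  · linear_combination -w 1 * huv + u 0 * hw
  · linear_combination w 0 * huv + u 1 * hw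

theorem exists_eq_vecMulVec_of_det_eq_zero {a : Matrix (Fin 2) (Fin 2) K} (ha : a ≠ 0)
    (hdet : a.det = 0) : ∃ c r : Fin 2 → K, c ≠ 0 ∧ r ≠ 0 ∧ a = vecMulVec c r := by
  obtain ⟨v, hv, hva⟩ := exists_vecMul_eq_zero_iff.mpr hdet
  have hc : ![-v 1, v 0] ≠ 0 := fun h => hv <| by
    ext i
    fin_cases i
    · simpa using congrFun h 1
    · simpa using congrFun h 0
  obtain ⟨r, rfl⟩ := exists_eq_vecMulVec_of_forall_dotProduct_eq_zero hc fun u hu => by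
    obtain ⟨t, rfl⟩ :=
      Submodule.mem_span_singleton.mp (mem_span_singleton_of_dotProduct_eq_zero hv hu)
    rw [smul_vecMul, hva, smul_zero]
  exact ⟨_, r, hc, fun hr => ha (by rw [hr, vecMulVec_zero]), rfl⟩

end Matrix

theorem L_and_R_classes_are_punctured_planes (a : Matrix (Fin 2) (Fin 2) ℝ)
    (ha : a ≠ 0) (hdet : a.det = 0) :
    (∃ P : Submodule ℝ (Matrix (Fin 2) (Fin 2) ℝ), Module.finrank ℝ P = 2 ∧
      (∀ x ∈ P, x.det = 0) ∧
      {x : Matrix (Fin 2) (Fin 2) ℝ |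
          LinearMap.range x.vecMulLinear = LinearMap.range a.vecMulLinear}
        = {x | x ∈ P ∧ x ≠ 0}) ∧
    (∃ P : Submodule ℝ (Matrix (Fin 2) (Fin 2) ℝ), Module.finrank ℝ P = 2 ∧
      (∀ x ∈ P, x.det = 0) ∧
      {x : Matrix (Fin 2) (Fin 2) ℝ |
          LinearMap.ker x.vecMulLinear = LinearMap.ker a.vecMulLinear}
        = {x | x ∈ P ∧ x ≠ 0}) := by
  obtain ⟨c, r, hc, hr, rfl⟩ := exists_eq_vecMulVec_of_det_eq_zero ha hdet
  refine ⟨⟨_, ?_, ?_, setOf_range_vecMulLinear_eq_vecMulVec hc hr⟩,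
    ⟨_, ?_, ?_, setOf_ker_vecMulLinear_eq_vecMulVec hc hr⟩⟩
  · rw [LinearMap.finrank_range_of_inj (vecMulVec_left_injective hr), Module.finrank_fin_fun]
  · rintro _ ⟨d, rfl⟩
    exact det_vecMulVec d r
  · rw [LinearMap.finrank_range_of_inj (vecMulVec_right_injective hc), Module.finrank_fin_fun]
  · rintro _ ⟨s, rfl⟩
    exact det_vecMulVec c s
end

section
/- For a rank-1 idempotent e ∈ M₂(ℝ), the set of idempotents in the L-class of e equals e + (1-e)·S₂·e, and the set of idempotents in the R-class of e equals e + e·S₂·(1-e); in particular each of these sets is an affine line through e consisting entirely of idempotents. -/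
/-!
For idempotents, equal row spaces (resp. equal left kernels) amount to
`f * e = f ∧ e * f = e` (resp. `e * f = f ∧ f * e = e`), and these `f` are exactly the
`e + (1 - e) * s * e` (resp. `e + e * s * (1 - e)`); one may take `s = f - e`, which squares to
zero, so `det s = 0`. A rank-one idempotent is `e = u vᵀ` with `v ⬝ᵥ u = 1`; the first family is
then `{w vᵀ | v ⬝ᵥ w = 1}`, and in the plane these `w` form the line `u + t • (-v₁, v₀)`.
The second family is symmetric.
-/

open Matrix

namespace IsIdempotentElem

variable {R : Type*} [Ring R] {e f : R}

theorem one_sub_mul_sub_mul (he : IsIdempotentElem e) (hfe : f * e = f) (hef : e * f = e) :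
    (1 - e) * (f - e) * e = f - e := by
  have h₁ : (f - e) * e = f - e := by rw [sub_mul, hfe, he.eq]
  have h₂ : e * (f - e) = 0 := by rw [mul_sub, hef, he.eq, sub_self]
  rw [mul_assoc, h₁, one_sub_mul, h₂, sub_zero]

theorem mul_sub_mul_one_sub (he : IsIdempotentElem e) (hef : e * f = f) (hfe : f * e = e) :
    e * (f - e) * (1 - e) = f - e := by
  have h₁ : e * (f - e) = f - e := by rw [mul_sub, hef, he.eq]
  have h₂ : (f - e) * e = 0 := by rw [sub_mul, hfe, he.eq, sub_self]
  rw [h₁, mul_one_sub, h₂, sub_zero]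

theorem exists_eq_add_one_sub_mul_mul_iff (he : IsIdempotentElem e) :
    (∃ s, f = e + (1 - e) * s * e) ↔ f * e = f ∧ e * f = e := by
  refine ⟨?_, fun h => ⟨f - e, by rw [he.one_sub_mul_sub_mul h.1 h.2, add_sub_cancel]⟩⟩
  rintro ⟨s, rfl⟩
  refine ⟨by rw [add_mul, mul_assoc _ e e, he.eq], ?_⟩
  rw [mul_add, he.eq, ← mul_assoc, ← mul_assoc, he.mul_one_sub_self, zero_mul, zero_mul,
    add_zero]

theorem exists_eq_add_mul_mul_one_sub_iff (he : IsIdempotentElem e) :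
    (∃ s, f = e + e * s * (1 - e)) ↔ e * f = f ∧ f * e = e := by
  refine ⟨?_, fun h => ⟨f - e, by rw [he.mul_sub_mul_one_sub h.1 h.2, add_sub_cancel]⟩⟩
  rintro ⟨s, rfl⟩
  refine ⟨by rw [mul_add, ← mul_assoc, ← mul_assoc, he.eq], ?_⟩
  rw [add_mul, he.eq, mul_assoc, he.one_sub_mul_self, mul_zero, add_zero]

end IsIdempotentElem

namespace Matrix

variable {m n K : Type*}

section CommSemiring

variable [Fintype m] [CommSemiring K]

theorem range_vecMulLinear_le_iff [Fintype n] {A : Matrix m n K} {B : Matrix n n K}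
    (hB : IsIdempotentElem B) :
    LinearMap.range A.vecMulLinear ≤ LinearMap.range B.vecMulLinear ↔ A * B = A := by
  refine ⟨fun h => ext_iff_vecMul.2 fun y => ?_, fun h => ?_⟩
  · obtain ⟨x, hx⟩ := h ⟨y, rfl⟩
    rw [vecMulLinear_apply, vecMulLinear_apply] at hx
    rw [← vecMul_vecMul, ← hx, vecMul_vecMul, hB.eq]
  · rintro _ ⟨x, rfl⟩
    exact ⟨x ᵥ* A, by rw [vecMulLinear_apply, vecMulLinear_apply, vecMul_vecMul, h]⟩

theorem range_vecMulLinear_eq_iff {e f : Matrix m m K} (he : IsIdempotentElem e) :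
    IsIdempotentElem f ∧ LinearMap.range f.vecMulLinear = LinearMap.range e.vecMulLinear ↔
      f * e = f ∧ e * f = e := by
  refine ⟨fun ⟨hf, h⟩ =>
    ⟨(range_vecMulLinear_le_iff he).1 h.le, (range_vecMulLinear_le_iff hf).1 h.ge⟩, ?_⟩
  rintro ⟨hfe, hef⟩
  have hf : IsIdempotentElem f := by
    calc f * f = f * e * f := by rw [hfe]
      _ = f := by rw [mul_assoc, hef, hfe]
  exact ⟨hf, le_antisymm ((range_vecMulLinear_le_iff he).2 hfe)
    ((range_vecMulLinear_le_iff hf).2 hef)⟩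

end CommSemiring

section CommRing

variable [Fintype m] [CommRing K]

theorem ker_vecMulLinear_le_iff {A : Matrix m m K} {B : Matrix m n K} (hA : IsIdempotentElem A) :
    LinearMap.ker A.vecMulLinear ≤ LinearMap.ker B.vecMulLinear ↔ A * B = B := by
  refine ⟨fun h => ext_iff_vecMul.2 fun y => ?_, fun h x hx => ?_⟩
  · have hy : y ᵥ* A - y ∈ LinearMap.ker A.vecMulLinear := by
      rw [LinearMap.mem_ker, vecMulLinear_apply, sub_vecMul, vecMul_vecMul, hA.eq, sub_self]
    have := h hy
    rwa [LinearMap.mem_ker, vecMulLinear_apply, sub_vecMul, sub_eq_zero, vecMul_vecMul] at this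
  · rw [LinearMap.mem_ker, vecMulLinear_apply] at hx ⊢
    rw [← h, ← vecMul_vecMul, hx, zero_vecMul]

theorem ker_vecMulLinear_eq_iff {e f : Matrix m m K} (he : IsIdempotentElem e) :
    IsIdempotentElem f ∧ LinearMap.ker f.vecMulLinear = LinearMap.ker e.vecMulLinear ↔
      e * f = f ∧ f * e = e := by
  refine ⟨fun ⟨hf, h⟩ =>
    ⟨(ker_vecMulLinear_le_iff he).1 h.ge, (ker_vecMulLinear_le_iff hf).1 h.le⟩, ?_⟩
  rintro ⟨hef, hfe⟩
  have hf : IsIdempotentElem f := by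
    calc f * f = f * (e * f) := by rw [hef]
      _ = f := by rw [← mul_assoc, hfe, hef]
  exact ⟨hf, le_antisymm ((ker_vecMulLinear_le_iff hf).2 hfe)
    ((ker_vecMulLinear_le_iff he).2 hef)⟩

variable [Fintype n] [DecidableEq n] [Nonempty n]

theorem det_mul_mul_eq_zero_of_mul_eq_zero {a b : Matrix n n K} (hab : a * b = 0)
    (s : Matrix n n K) : (a * s * b).det = 0 := by
  rw [det_mul, det_mul, mul_right_comm, ← det_mul, hab, det_zero, zero_mul]

theorem exists_det_eq_zero_and_eq_add_one_sub_mul_mul_iff {e f : Matrix n n K}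
    (he : IsIdempotentElem e) :
    (∃ s : Matrix n n K, s.det = 0 ∧ f = e + (1 - e) * s * e) ↔ f * e = f ∧ e * f = e := by
  refine ⟨fun ⟨s, _, hs⟩ => he.exists_eq_add_one_sub_mul_mul_iff.1 ⟨s, hs⟩, fun h => ?_⟩
  refine ⟨f - e, ?_, by rw [he.one_sub_mul_sub_mul h.1 h.2, add_sub_cancel]⟩
  rw [← he.one_sub_mul_sub_mul h.1 h.2]
  exact det_mul_mul_eq_zero_of_mul_eq_zero he.one_sub_mul_self _

theorem exists_det_eq_zero_and_eq_add_mul_mul_one_sub_iff {e f : Matrix n n K}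
    (he : IsIdempotentElem e) :
    (∃ s : Matrix n n K, s.det = 0 ∧ f = e + e * s * (1 - e)) ↔ e * f = f ∧ f * e = e := by
  refine ⟨fun ⟨s, _, hs⟩ => he.exists_eq_add_mul_mul_one_sub_iff.1 ⟨s, hs⟩, fun h => ?_⟩
  refine ⟨f - e, ?_, by rw [he.mul_sub_mul_one_sub h.1 h.2, add_sub_cancel]⟩
  rw [← he.mul_sub_mul_one_sub h.1 h.2]
  exact det_mul_mul_eq_zero_of_mul_eq_zero he.mul_one_sub_self _

end CommRing

section Field

variable [Field K]

theorem exists_eq_vecMulVec_of_rank_le_one [Fintype n] [DecidableEq n] {A : Matrix m n K}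
    (h : A.rank ≤ 1) : ∃ u v, A = vecMulVec u v := by
  obtain ⟨u, hu⟩ := finrank_le_one_iff.1 h
  have hcol : ∀ j, A.col j ∈ LinearMap.range A.mulVecLin := fun j =>
    ⟨Pi.single j 1, by rw [mulVecLin_apply, mulVec_single_one]⟩
  choose c hc using fun j => hu ⟨A.col j, hcol j⟩
  refine ⟨u.1, c, ext fun i j => ?_⟩
  simpa [vecMulVec_apply, mul_comm] using (congrFun (congrArg Subtype.val (hc j)) i).symm

variable [Fintype m] {u v : m → K}

theorem dotProduct_eq_one_of_isIdempotentElem_vecMulVec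
    (h : IsIdempotentElem (vecMulVec u v)) (hne : vecMulVec u v ≠ 0) : v ⬝ᵥ u = 1 := by
  refine smul_left_injective K hne ?_
  change (v ⬝ᵥ u) • vecMulVec u v = (1 : K) • vecMulVec u v
  rw [one_smul, ← vecMulVec_smul, ← vecMulVec_mul_vecMulVec, h.eq]

theorem mul_vecMulVec_eq_and_vecMulVec_mul_eq_iff (hvu : v ⬝ᵥ u = 1) {f : Matrix m m K} :
    f * vecMulVec u v = f ∧ vecMulVec u v * f = vecMulVec u v ↔
      ∃ w, v ⬝ᵥ w = 1 ∧ f = vecMulVec w v := by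
  refine ⟨fun ⟨hfe, hef⟩ => ⟨f *ᵥ u, ?_, by rw [← mul_vecMulVec, hfe]⟩, ?_⟩
  · have hv : v ᵥ* vecMulVec u v = v := by rw [vecMul_vecMulVec, hvu, one_smul]
    calc v ⬝ᵥ (f *ᵥ u) = (v ᵥ* vecMulVec u v ᵥ* f) ⬝ᵥ u := by rw [hv, dotProduct_mulVec]
      _ = 1 := by rw [vecMul_vecMul, hef, hv, hvu]
  · rintro ⟨w, hvw, rfl⟩
    simp [vecMulVec_mul_vecMulVec, hvu, hvw]

theorem vecMulVec_mul_eq_and_mul_vecMulVec_eq_iff (hvu : v ⬝ᵥ u = 1) {f : Matrix m m K} :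
    vecMulVec u v * f = f ∧ f * vecMulVec u v = vecMulVec u v ↔
      ∃ w, w ⬝ᵥ u = 1 ∧ f = vecMulVec u w := by
  refine ⟨fun ⟨hef, hfe⟩ => ⟨v ᵥ* f, ?_, by rw [← vecMulVec_mul, hef]⟩, ?_⟩
  · have hu : vecMulVec u v *ᵥ u = u := by
      rw [vecMulVec_mulVec, hvu, MulOpposite.op_one, one_smul]
    calc (v ᵥ* f) ⬝ᵥ u = v ⬝ᵥ ((f * vecMulVec u v) *ᵥ u) := by
          rw [← mulVec_mulVec, hu, dotProduct_mulVec]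
      _ = 1 := by rw [hfe, hu, hvu]
  · rintro ⟨w, hwu, rfl⟩
    simp [vecMulVec_mul_vecMulVec, hvu, hwu]

end Field

end Matrix

section FinTwo

variable {K : Type*} [Field K]

theorem dotProduct_eq_one_iff_exists_fin_two {u v w : Fin 2 → K} (hvu : v ⬝ᵥ u = 1) :
    v ⬝ᵥ w = 1 ↔ ∃ t : K, u + t • ![-v 1, v 0] = w := by
  refine ⟨fun hvw => ?_, ?_⟩
  · suffices ∃ t : K, u 0 - t * v 1 = w 0 ∧ u 1 + t * v 0 = w 1 by
      obtain ⟨t, h₀, h₁⟩ := this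
      exact ⟨t, funext fun i => by fin_cases i <;> simp [← h₀, ← h₁, sub_eq_add_neg]⟩
    simp only [dotProduct, Fin.sum_univ_two] at hvu hvw
    by_cases hv₀ : v 0 = 0
    · have hv₁ : v 1 ≠ 0 := by rintro h; simp [hv₀, h] at hvu
      refine ⟨(u 0 - w 0) / v 1, by field_simp; ring, ?_⟩
      rw [hv₀, mul_zero, add_zero]
      apply mul_left_cancel₀ hv₁
      linear_combination hvu - hvw + (w 0 - u 0) * hv₀
    · refine ⟨(w 1 - u 1) / v 0, ?_, by field_simp; ring⟩
      field_simp
      linear_combination hvu - hvw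
  · rintro ⟨t, rfl⟩
    have hperp : v ⬝ᵥ ![-v 1, v 0] = 0 := by
      simp only [dotProduct, Fin.sum_univ_two, cons_val_zero, cons_val_one, cons_val_fin_one]; ring
    rw [dotProduct_add, dotProduct_smul, hperp, smul_zero, add_zero, hvu]

theorem perp_ne_zero_fin_two {v : Fin 2 → K} (hv : v ≠ 0) : ![-v 1, v 0] ≠ 0 := by
  refine fun h => hv (funext fun i => ?_)
  fin_cases i
  · simpa using congrFun h 1
  · simpa using congrFun h 0

end FinTwo

theorem idempotents_in_L_R_classes (e : Matrix (Fin 2) (Fin 2) ℝ)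
    (he : e * e = e) (hrank : e.rank = 1) :
    ({f : Matrix (Fin 2) (Fin 2) ℝ | f * f = f ∧
        LinearMap.range f.vecMulLinear = LinearMap.range e.vecMulLinear}
      = {x | ∃ s : Matrix (Fin 2) (Fin 2) ℝ, s.det = 0 ∧ x = e + (1 - e) * s * e}) ∧
    ({f : Matrix (Fin 2) (Fin 2) ℝ | f * f = f ∧
        LinearMap.ker f.vecMulLinear = LinearMap.ker e.vecMulLinear}
      = {x | ∃ s : Matrix (Fin 2) (Fin 2) ℝ, s.det = 0 ∧ x = e + e * s * (1 - e)}) ∧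
    (∃ d : Matrix (Fin 2) (Fin 2) ℝ, d ≠ 0 ∧
      {f : Matrix (Fin 2) (Fin 2) ℝ | f * f = f ∧
          LinearMap.range f.vecMulLinear = LinearMap.range e.vecMulLinear}
        = {x | ∃ t : ℝ, x = e + t • d}) ∧
    (∃ d : Matrix (Fin 2) (Fin 2) ℝ, d ≠ 0 ∧
      {f : Matrix (Fin 2) (Fin 2) ℝ | f * f = f ∧
          LinearMap.ker f.vecMulLinear = LinearMap.ker e.vecMulLinear}
        = {x | ∃ t : ℝ, x = e + t • d}) := by
  have hL f := range_vecMulLinear_eq_iff (f := f) he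
  have hR f := ker_vecMulLinear_eq_iff (f := f) he
  refine ⟨Set.ext fun f =>
      (hL f).trans (exists_det_eq_zero_and_eq_add_one_sub_mul_mul_iff he).symm,
    Set.ext fun f => (hR f).trans (exists_det_eq_zero_and_eq_add_mul_mul_one_sub_iff he).symm, ?_⟩
  obtain ⟨u, v, rfl⟩ := exists_eq_vecMulVec_of_rank_le_one hrank.le
  have hvu : v ⬝ᵥ u = 1 :=
    dotProduct_eq_one_of_isIdempotentElem_vecMulVec he (by rintro h; simp [h] at hrank)
  have hu : u ≠ 0 := by rintro rfl; simp at hvu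
  have hv : v ≠ 0 := by rintro rfl; simp at hvu
  have huv : u ⬝ᵥ v = 1 := by rwa [dotProduct_comm]
  refine ⟨⟨vecMulVec ![-v 1, v 0] v, ?_, Set.ext fun f => (hL f).trans ?_⟩,
    ⟨vecMulVec u ![-u 1, u 0], ?_, Set.ext fun f => (hR f).trans ?_⟩⟩
  · exact vecMulVec_eq_zero.not.2 (not_or.2 ⟨perp_ne_zero_fin_two hv, hv⟩)
  · rw [mul_vecMulVec_eq_and_vecMulVec_mul_eq_iff hvu]
    simp only [dotProduct_eq_one_iff_exists_fin_two hvu, exists_exists_eq_and, add_vecMulVec,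
      smul_vecMulVec]
    rfl
  · exact vecMulVec_eq_zero.not.2 (not_or.2 ⟨hu, perp_ne_zero_fin_two hu⟩)
  · rw [vecMulVec_mul_eq_and_mul_vecMulVec_eq_iff hvu]
    simp only [dotProduct_comm _ u, dotProduct_eq_one_iff_exists_fin_two huv, exists_exists_eq_and,
      vecMulVec_add, vecMulVec_smul]
    rfl
end

section
/- For a nonzero singular 2×2 real matrix a, the set of semigroup-theoretic inverses of a (matrices x with a·x·a = a and x·a·x = x) equals SP(a;1) = {x : det x = 0, tr(a·x) = 1}. -/
open Matrix

/-- A singular `2 × 2` matrix has rank at most one, which makes `a x a` a multiple of `a`. -/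
theorem Matrix.mul_mul_eq_trace_smul_of_det_eq_zero {R : Type*} [CommRing R]
    (a x : Matrix (Fin 2) (Fin 2) R) (h : a.det = 0) :
    a * x * a = (a * x).trace • a := by
  rw [det_fin_two] at h
  ext i j
  fin_cases i <;> fin_cases j <;>
    simp [mul_apply, Fin.sum_univ_two, trace_fin_two]
  · linear_combination (-x 1 1) * h
  · linear_combination x 0 1 * h
  · linear_combination x 1 0 * h
  · linear_combination (-x 0 0) * h

theorem Matrix.det_eq_zero_of_mul_mul_eq_self {n R : Type*} [Fintype n] [DecidableEq n]
    [CommRing R] {a x : Matrix n n R} (hxax : x * a * x = x) (ha : a.det = 0) :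
    x.det = 0 := by
  rw [← hxax, det_mul, det_mul, ha, mul_zero, zero_mul]

theorem inverses_eq_SP_a_one (a : Matrix (Fin 2) (Fin 2) ℝ)
    (ha : a ≠ 0) (hdet : a.det = 0) :
    {x : Matrix (Fin 2) (Fin 2) ℝ | a * x * a = a ∧ x * a * x = x}
      = {x : Matrix (Fin 2) (Fin 2) ℝ | x.det = 0 ∧ (a * x).trace = 1} := by
  ext x
  constructor
  · rintro ⟨haxa, hxax⟩
    refine ⟨det_eq_zero_of_mul_mul_eq_self hxax hdet, smul_left_injective ℝ ha ?_⟩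
    change (a * x).trace • a = (1 : ℝ) • a
    rw [← mul_mul_eq_trace_smul_of_det_eq_zero a x hdet, haxa, one_smul]
  · rintro ⟨hx, ht⟩
    constructor
    · rw [mul_mul_eq_trace_smul_of_det_eq_zero a x hdet, ht, one_smul]
    · rw [mul_mul_eq_trace_smul_of_det_eq_zero x a hx, trace_mul_comm, ht, one_smul]
end
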